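/- arXiv:2407.01121 — 5 statements merged into one kernel-verified Lean document; each statement's English description precedes it below -/
import Mathlib

section
/- If G is a trivially well-dominated graph (i.e., there exist vertices v_1,...,v_t whose closed neighborhoods are cliques partitioning V(G)) and H is any well-dominated graph, then the strong product G ⊠ H is well-dominated. -/
open SimpleGraph

variable {V : Type*} {W : Type*}

/-- The strong product of two simple graphs. -/
def strongProd (G : SimpleGraph V) (H : SimpleGraph W) : SimpleGraph (V × W) where
  Adj x y := x ≠ y ∧ (x.1 = y.1 ∨ G.Adj x.1 y.1) ∧ (x.2 = y.2 ∨ H.Adj x.2 y.2)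
  symm := ⟨fun x y ⟨hne, h1, h2⟩ =>
    ⟨hne.symm, h1.imp Eq.symm (fun h => h.symm), h2.imp Eq.symm (fun h => h.symm)⟩⟩
  loopless := ⟨fun x h => h.1 rfl⟩

/-- A dominating set: every vertex outside has a neighbor inside. -/
def IsDomSet (G : SimpleGraph V) (D : Set V) : Prop :=
  ∀ v, v ∉ D → ∃ u ∈ D, G.Adj u v

/-- A minimal dominating set. -/
def IsMinlDomSet (G : SimpleGraph V) (D : Set V) : Prop :=
  IsDomSet G D ∧ ∀ D', D' ⊂ D → ¬ IsDomSet G D'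

/-- A graph is well-dominated if every minimal dominating set has minimum cardinality. -/
def WellDominated (G : SimpleGraph V) : Prop :=
  ∀ D D' : Set V, IsMinlDomSet G D → IsDomSet G D' → D.ncard ≤ D'.ncard

/-- The domination number. -/
noncomputable def domNum (G : SimpleGraph V) : ℕ :=
  sInf {n | ∃ D : Set V, IsDomSet G D ∧ D.ncard = n}

/-- The closed neighborhood of a vertex. -/
def closedNbhd (G : SimpleGraph V) (v : V) : Set V := insert v (G.neighborSet v)

/-- `G` is trivially well-dominated via the vertices `u 0, …, u (t-1)`:
their closed neighborhoods are cliques and partition `V`. -/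
def TriviallyWellDominatedWith (G : SimpleGraph V) {t : ℕ} (u : Fin t → V) : Prop :=
  (∀ i, G.IsClique (closedNbhd G (u i))) ∧ (∀ v : V, ∃! i, v ∈ closedNbhd G (u i))

def TriviallyWellDominated (G : SimpleGraph V) : Prop :=
  ∃ (t : ℕ) (u : Fin t → V), TriviallyWellDominatedWith G u

/-- An edge dominating set: every edge of `G` not in `F` shares an endpoint
with some edge of `F`. -/
def IsEDS (G : SimpleGraph V) (F : Set (Sym2 V)) : Prop :=
  F ⊆ G.edgeSet ∧ ∀ e ∈ G.edgeSet, e ∉ F → ∃ f ∈ F, ∃ v, v ∈ e ∧ v ∈ f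

/-- A minimal edge dominating set. -/
def IsMinlEDS (G : SimpleGraph V) (F : Set (Sym2 V)) : Prop :=
  IsEDS G F ∧ ∀ F', F' ⊂ F → ¬ IsEDS G F'

/-- Well-edge-dominated: every minimal edge dominating set has minimum cardinality. -/
def WellEdgeDominated (G : SimpleGraph V) : Prop :=
  ∀ F F' : Set (Sym2 V), IsMinlEDS G F → IsEDS G F' → F.ncard ≤ F'.ncard

/-- A matching, as a set of pairwise nonadjacent edges. -/
def IsMatchingSet (G : SimpleGraph V) (M : Set (Sym2 V)) : Prop :=
  M ⊆ G.edgeSet ∧ ∀ e ∈ M, ∀ f ∈ M, e ≠ f → ∀ v : V, ¬ (v ∈ e ∧ v ∈ f)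

/-- A maximal matching. -/
def IsMaxlMatching (G : SimpleGraph V) (M : Set (Sym2 V)) : Prop :=
  IsMatchingSet G M ∧ ∀ M', M ⊆ M' → IsMatchingSet G M' → M' = M

/-- A maximum matching. -/
def IsMaxMatching (G : SimpleGraph V) (M : Set (Sym2 V)) : Prop :=
  IsMatchingSet G M ∧ ∀ M', IsMatchingSet G M' → M'.ncard ≤ M.ncard

/-- Equimatchable: every maximal matching is maximum. -/
def Equimatchable (G : SimpleGraph V) : Prop :=
  ∀ M M' : Set (Sym2 V), IsMaxlMatching G M → IsMatchingSet G M' → M'.ncard ≤ M.ncard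

/-- The set of endpoints of the edges of `M`. -/
def mVerts (M : Set (Sym2 V)) : Set V := {v | ∃ e ∈ M, v ∈ e}

/-- A perfect matching covers every vertex. -/
def IsPerfectMatchingSet (G : SimpleGraph V) (M : Set (Sym2 V)) : Prop :=
  IsMatchingSet G M ∧ ∀ v : V, v ∈ mVerts M

/-- A near-perfect matching covers all vertices but exactly one. -/
def IsNearPerfectMatchingSet (G : SimpleGraph V) (M : Set (Sym2 V)) : Prop :=
  IsMatchingSet G M ∧ ∃ w : V, mVerts M = {w}ᶜ

/-- The matching number. -/
noncomputable def matchNum (G : SimpleGraph V) : ℕ :=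
  sSup {n | ∃ M : Set (Sym2 V), IsMatchingSet G M ∧ M.ncard = n}

/-- The independence number. -/
noncomputable def indepNum (G : SimpleGraph V) : ℕ :=
  sSup {n | ∃ S : Set V, (S.Pairwise fun u v => ¬ G.Adj u v) ∧ S.ncard = n}

/-- `G` with a set of vertices deleted (induced subgraph on the complement). -/
abbrev delVerts (G : SimpleGraph V) (S : Set V) : SimpleGraph ↥(Sᶜ) := G.induce Sᶜ

/-- Factor-critical: deleting any vertex leaves a graph with a perfect matching. -/
def FactorCritical (G : SimpleGraph V) : Prop :=
  ∀ v : V, ∃ M, IsPerfectMatchingSet (delVerts G {v}) M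

/-- 2-connected: at least three vertices, connected, and no cutvertex. -/
def TwoConnected (G : SimpleGraph V) [Fintype V] : Prop :=
  3 ≤ Fintype.card V ∧ G.Connected ∧ ∀ v : V, (delVerts G {v}).Connected

/-! Collapsing each clique class of `G` to a point maps `G ⊠ H` onto disjoint copies of `H`. The
projection of a dominating set onto the copy over a class dominates `H`, since the representative
of the class has all its neighbours inside it. A vertex of a minimal dominating set `D` has a
private neighbour lying over its own class, so the collapse is injective on `D` and every
projection of `D` is a minimal dominating set of `H`. Hence
`|D| = ∑ᵢ |projᵢ D| ≤ ∑ᵢ |projᵢ D'| ≤ |D'|` for every dominating set `D'`. -/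

theorem Set.ncard_eq_sum_ncard_fiber {ι : Type*} [Fintype ι] [Finite W] (A : Set (ι × W)) :
    A.ncard = ∑ i, {w | (i, w) ∈ A}.ncard := by
  let e : A ≃ Σ i, {w | (i, w) ∈ A} :=
    { toFun := fun x => ⟨x.1.1, x.1.2, x.2⟩
      invFun := fun s => ⟨(s.1, s.2.1), s.2.2⟩ }
  simp only [← Nat.card_coe_set_eq, Nat.card_congr e, Nat.card_sigma]

section ClosedNbhd

variable {G : SimpleGraph V} {H : SimpleGraph W}

lemma mem_closedNbhd {a b : V} : b ∈ closedNbhd G a ↔ b = a ∨ G.Adj a b := Iff.rfl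

lemma self_mem_closedNbhd (G : SimpleGraph V) (a : V) : a ∈ closedNbhd G a :=
  Set.mem_insert a _

lemma mem_closedNbhd_comm {a b : V} : b ∈ closedNbhd G a ↔ a ∈ closedNbhd G b := by
  simp only [mem_closedNbhd, eq_comm, G.adj_comm]

lemma strongProd_adj {x y : V × W} :
    (strongProd G H).Adj x y ↔ x ≠ y ∧ y.1 ∈ closedNbhd G x.1 ∧ y.2 ∈ closedNbhd H x.2 := by
  simp only [strongProd, mem_closedNbhd, eq_comm (a := y.1), eq_comm (a := y.2)]

lemma closedNbhd_strongProd (x : V × W) :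
    closedNbhd (strongProd G H) x = closedNbhd G x.1 ×ˢ closedNbhd H x.2 := by
  ext p
  by_cases hpx : p = x
  · subst hpx
    exact ⟨fun _ => ⟨self_mem_closedNbhd G _, self_mem_closedNbhd H _⟩,
      fun _ => self_mem_closedNbhd _ _⟩
  · simp only [mem_closedNbhd (a := x), strongProd_adj, hpx, Set.mem_prod]
    tauto

lemma IsDomSet.exists_mem_closedNbhd {D : Set V} (hD : IsDomSet G D) (v : V) :
    ∃ u ∈ D, v ∈ closedNbhd G u := by
  by_cases hv : v ∈ D
  · exact ⟨v, hv, self_mem_closedNbhd G v⟩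
  · obtain ⟨u, hu, huv⟩ := hD v hv
    exact ⟨u, hu, Or.inr huv⟩

/-- The private neighbour of `x` witnesses that `D \ {x}` is not dominating. -/
lemma IsMinlDomSet.exists_private {D : Set V} (hD : IsMinlDomSet G D) {x : V} (hx : x ∈ D) :
    ∃ p ∈ closedNbhd G x, ∀ y ∈ D, p ∈ closedNbhd G y → y = x := by
  obtain ⟨p, hp, hpriv⟩ : ∃ p, p ∉ D \ {x} ∧ ∀ y ∈ D \ {x}, ¬ G.Adj y p := by
    simpa [IsDomSet] using hD.2 _ (Set.sdiff_singleton_ssubset.2 hx)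
  refine ⟨p, ?_, fun y hy hpy => by_contra fun hyx => ?_⟩
  · by_cases hpx : p = x
    · exact Or.inl hpx
    · obtain ⟨y, hy, hyp⟩ := hD.1 p fun hpD => hp ⟨hpD, hpx⟩
      obtain rfl : y = x := by_contra fun hyx => hpriv y ⟨hy, hyx⟩ hyp
      exact Or.inr hyp
  · rcases hpy with rfl | hyp
    · exact hp ⟨hy, hyx⟩
    · exact hpriv y ⟨hy, hyx⟩ hyp

end ClosedNbhd

/-- A partition of the vertices into cliques, each class being the closed neighbourhood of its
representative. -/
structure SimplicialCliquePartition (G : SimpleGraph V) (ι : Type*) where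
  cls : V → ι
  rep : ι → V
  cls_eq_of_mem_closedNbhd_rep : ∀ {i v}, v ∈ closedNbhd G (rep i) → cls v = i
  adj_of_cls_eq : ∀ {a b}, cls a = cls b → a ≠ b → G.Adj a b

noncomputable def TriviallyWellDominatedWith.toSimplicialCliquePartition {G : SimpleGraph V} {t : ℕ}
    {u : Fin t → V} (hu : TriviallyWellDominatedWith G u) :
    SimplicialCliquePartition G (Fin t) where
  cls v := (hu.2 v).exists.choose
  rep := u
  cls_eq_of_mem_closedNbhd_rep hv := (hu.2 _).unique (hu.2 _).exists.choose_spec hv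
  adj_of_cls_eq {a b} hab hne :=
    hu.1 _ (hu.2 a).exists.choose_spec (hab ▸ (hu.2 b).exists.choose_spec) hne

namespace SimplicialCliquePartition

variable {G : SimpleGraph V} {H : SimpleGraph W} {ι : Type*} (P : SimplicialCliquePartition G ι)

lemma cls_rep (i : ι) : P.cls (P.rep i) = i :=
  P.cls_eq_of_mem_closedNbhd_rep (self_mem_closedNbhd G _)

lemma mem_closedNbhd_of_cls_eq {a b : V} (h : P.cls a = P.cls b) : b ∈ closedNbhd G a := by
  by_cases hab : a = b
  · exact Or.inl hab.symm
  · exact Or.inr (P.adj_of_cls_eq h hab)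

def proj (D : Set (V × W)) (i : ι) : Set W := {w | ∃ v, P.cls v = i ∧ (v, w) ∈ D}

def squash (x : V × W) : ι × W := (P.cls x.1, x.2)

lemma fiber_image_squash (D : Set (V × W)) (i : ι) :
    {w | (i, w) ∈ P.squash '' D} = P.proj D i := by
  ext w
  simp only [squash, proj, Set.mem_image, Prod.mk.injEq, Prod.exists]
  constructor
  · rintro ⟨v, w', hD, rfl, rfl⟩
    exact ⟨v, rfl, hD⟩
  · rintro ⟨v, rfl, hD⟩
    exact ⟨v, w, hD, rfl, rfl⟩

lemma ncard_image_squash [Fintype ι] [Finite W] (D : Set (V × W)) :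
    (P.squash '' D).ncard = ∑ i, (P.proj D i).ncard := by
  simp only [Set.ncard_eq_sum_ncard_fiber, fiber_image_squash]

lemma isDomSet_proj {D : Set (V × W)} (hD : IsDomSet (strongProd G H) D) (i : ι) :
    IsDomSet H (P.proj D i) := by
  intro w hw
  obtain ⟨x, hxD, hadj⟩ := hD (P.rep i, w) fun h => hw ⟨_, P.cls_rep i, h⟩
  obtain ⟨-, hx1, hx2⟩ := strongProd_adj.1 hadj
  have hx : x.2 ∈ P.proj D i :=
    ⟨x.1, P.cls_eq_of_mem_closedNbhd_rep (mem_closedNbhd_comm.1 hx1), hxD⟩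
  rcases hx2 with rfl | hadj
  · exact absurd hx hw
  · exact ⟨x.2, hx, hadj⟩

lemma exists_adj_same_cls {D : Set (V × W)} (hD : IsDomSet (strongProd G H) D)
    {p : V × W} (hp : p ∉ D) : ∃ x ∈ D, P.cls x.1 = P.cls p.1 ∧ (strongProd G H).Adj x p := by
  obtain ⟨a, b⟩ := p
  by_cases hb : b ∈ P.proj D (P.cls a)
  · obtain ⟨v, hv, hvD⟩ := hb
    exact ⟨(v, b), hvD, hv, strongProd_adj.2
      ⟨fun h => hp (h ▸ hvD), P.mem_closedNbhd_of_cls_eq hv, self_mem_closedNbhd H b⟩⟩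
  · obtain ⟨w, ⟨v, hv, hvD⟩, hwb⟩ := P.isDomSet_proj hD _ b hb
    exact ⟨(v, w), hvD, hv, strongProd_adj.2
      ⟨fun h => hwb.ne (congrArg Prod.snd h), P.mem_closedNbhd_of_cls_eq hv, Or.inr hwb⟩⟩

lemma exists_private_same_cls {D : Set (V × W)}
    (hD : IsMinlDomSet (strongProd G H) D) {x : V × W} (hx : x ∈ D) :
    ∃ b ∈ closedNbhd H x.2, ∀ y ∈ D, P.cls y.1 = P.cls x.1 → b ∈ closedNbhd H y.2 → y = x := by
  obtain ⟨p, hpx, hpriv⟩ := hD.exists_private hx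
  have hcls : P.cls p.1 = P.cls x.1 := by
    by_cases hpD : p ∈ D
    · rw [hpriv p hpD (self_mem_closedNbhd _ p)]
    · obtain ⟨y, hyD, hy, hyp⟩ := P.exists_adj_same_cls hD.1 hpD
      rw [← hy, hpriv y hyD (Or.inr hyp)]
  rw [closedNbhd_strongProd] at hpx
  refine ⟨p.2, hpx.2, fun y hyD hy hb => hpriv y hyD ?_⟩
  rw [closedNbhd_strongProd]
  exact ⟨P.mem_closedNbhd_of_cls_eq (hy.trans hcls.symm), hb⟩

lemma injOn_squash {D : Set (V × W)} (hD : IsMinlDomSet (strongProd G H) D) :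
    Set.InjOn P.squash D := by
  intro x hx y hy hxy
  obtain ⟨b, hb, hpriv⟩ := P.exists_private_same_cls hD hx
  simp only [squash, Prod.mk.injEq] at hxy
  exact (hpriv y hy hxy.1.symm (hxy.2 ▸ hb)).symm

lemma isMinlDomSet_proj {D : Set (V × W)} (hD : IsMinlDomSet (strongProd G H) D) (i : ι) :
    IsMinlDomSet H (P.proj D i) := by
  refine ⟨P.isDomSet_proj hD.1 i, fun E hE hEdom => ?_⟩
  obtain ⟨w, ⟨v, hv, hvD⟩, hwE⟩ := Set.exists_of_ssubset hE
  obtain ⟨b, -, hpriv⟩ := P.exists_private_same_cls hD hvD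
  obtain ⟨w', hw'E, hbw'⟩ := hEdom.exists_mem_closedNbhd b
  obtain ⟨v', hv', hv'D⟩ := hE.1 hw'E
  obtain ⟨-, rfl⟩ := Prod.mk.inj (hpriv (v', w') hv'D (hv'.trans hv.symm) hbw')
  exact hwE hw'E

end SimplicialCliquePartition

theorem SimplicialCliquePartition.wellDominated_strongProd {G : SimpleGraph V} {H : SimpleGraph W}
    {ι : Type*} [Fintype ι] [Finite V] [Finite W] (P : SimplicialCliquePartition G ι)
    (hH : WellDominated H) : WellDominated (strongProd G H) := by
  intro D D' hD hD'
  calc D.ncard = (P.squash '' D).ncard := ((P.injOn_squash hD).ncard_image).symm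
    _ = ∑ i, (P.proj D i).ncard := P.ncard_image_squash D
    _ ≤ ∑ i, (P.proj D' i).ncard :=
        Finset.sum_le_sum fun i _ => hH _ _ (P.isMinlDomSet_proj hD i) (P.isDomSet_proj hD' i)
    _ = (P.squash '' D').ncard := (P.ncard_image_squash D').symm
    _ ≤ D'.ncard := Set.ncard_image_le D'.toFinite

theorem stmt0 [Fintype V] [Fintype W] (G : SimpleGraph V) (H : SimpleGraph W)
    (hG : TriviallyWellDominated G) (hH : WellDominated H) :
    WellDominated (strongProd G H) := by
  obtain ⟨t, u, hu⟩ := hG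
  exact hu.toSimplicialCliquePartition.wellDominated_strongProd hH
end

section
/- If G is trivially well-dominated with clique partition given by N[u_1],...,N[u_t], and D is a minimal dominating set of G ⊠ H where H is well-dominated, then for each i the set D_i = {v ∈ V(H) : (u,v) ∈ D for some u ∈ N_G[u_i]} is a minimal dominating set of H. -/
open SimpleGraph

variable {V : Type*} {W : Type*}

/-!
Write `D_j` for the slice of `D` over the clique `N[u_j]`. Every slice of a dominating set of
`G ⊠ H` over a closed neighbourhood dominates `H`, since the vertex `(u_j, b)` is dominated only
from `N[u_j] × N[b]`. For minimality, suppose `D' ⊂ D_i` dominates `H`, and pick `(x, v) ∈ D`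
with `x ∈ N[u_i]` and `v ∉ D'`. Then `D \ {(x, v)}` still dominates `G ⊠ H`: a vertex `(a, b)`
with `a ∈ N[u_j]` is dominated by any `(y, w) ∈ D` with `y ∈ N[u_j]` and `w ∈ N[b]`, because
`N[u_j]` is a clique, and such a `(y, w) ≠ (x, v)` exists, coming from `D'` if `j = i` and from
`D_j` if `j ≠ i` (then `y ≠ x` as the closed neighbourhoods are disjoint). This contradicts the
minimality of `D`.
-/

theorem mem_closedNbhd_iff {G : SimpleGraph V} {v x : V} :
    x ∈ closedNbhd G v ↔ x = v ∨ G.Adj x v := by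
  simp only [closedNbhd, Set.mem_insert_iff, mem_neighborSet, adj_comm]

theorem isDomSet_iff_forall_exists_eq_or_adj {G : SimpleGraph V} {D : Set V} :
    IsDomSet G D ↔ ∀ v, ∃ u ∈ D, u = v ∨ G.Adj u v := by
  refine ⟨fun hD v => ?_, fun h v hv => ?_⟩
  · by_cases hv : v ∈ D
    · exact ⟨v, hv, Or.inl rfl⟩
    · obtain ⟨u, hu, hadj⟩ := hD v hv
      exact ⟨u, hu, Or.inr hadj⟩
  · obtain ⟨u, hu, rfl | hadj⟩ := h v
    · exact absurd hu hv
    · exact ⟨u, hu, hadj⟩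

theorem strongProd_eq_or_adj_iff {G : SimpleGraph V} {H : SimpleGraph W} {p q : V × W} :
    p = q ∨ (strongProd G H).Adj p q ↔
      (p.1 = q.1 ∨ G.Adj p.1 q.1) ∧ (p.2 = q.2 ∨ H.Adj p.2 q.2) := by
  by_cases hpq : p = q
  · simp [hpq]
  · simp [strongProd, hpq]

theorem IsDomSet.slice_closedNbhd {G : SimpleGraph V} {H : SimpleGraph W} {D : Set (V × W)}
    (hD : IsDomSet (strongProd G H) D) (c : V) :
    IsDomSet H {w : W | ∃ x ∈ closedNbhd G c, (x, w) ∈ D} := by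
  rw [isDomSet_iff_forall_exists_eq_or_adj] at hD ⊢
  intro b
  obtain ⟨⟨x, w⟩, hxw, hadj⟩ := hD (c, b)
  obtain ⟨hx, hw⟩ := strongProd_eq_or_adj_iff.mp hadj
  exact ⟨w, ⟨x, mem_closedNbhd_iff.mpr hx, hxw⟩, hw⟩

namespace TriviallyWellDominatedWith

variable {G : SimpleGraph V} {H : SimpleGraph W} {t : ℕ} {u : Fin t → V}

theorem exists_mem_ne_of_isDomSet_subset (hG : TriviallyWellDominatedWith G u)
    {D : Set (V × W)} (hD : IsDomSet (strongProd G H) D) {D' : Set W} (hD' : IsDomSet H D')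
    {i : Fin t} (hD'D : D' ⊆ {w : W | ∃ x ∈ closedNbhd G (u i), (x, w) ∈ D})
    {x : V} (hx : x ∈ closedNbhd G (u i)) {v : W} (hv : v ∉ D') (j : Fin t) (b : W) :
    ∃ y ∈ closedNbhd G (u j), ∃ w, (y, w) ∈ D ∧ (w = b ∨ H.Adj w b) ∧ (y, w) ≠ (x, v) := by
  by_cases hji : j = i
  · subst hji
    obtain ⟨w, hwD', hwb⟩ := isDomSet_iff_forall_exists_eq_or_adj.mp hD' b
    obtain ⟨y, hy, hyw⟩ := hD'D hwD'
    exact ⟨y, hy, w, hyw, hwb, fun h => hv ((Prod.mk.inj h).2 ▸ hwD')⟩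
  · obtain ⟨w, ⟨y, hy, hyw⟩, hwb⟩ :=
      isDomSet_iff_forall_exists_eq_or_adj.mp (hD.slice_closedNbhd (u j)) b
    exact ⟨y, hy, w, hyw, hwb, fun h => hji ((hG.2 x).unique ((Prod.mk.inj h).1 ▸ hy) hx)⟩

theorem isDomSet_diff_singleton (hG : TriviallyWellDominatedWith G u)
    {D : Set (V × W)} (hD : IsDomSet (strongProd G H) D) {D' : Set W} (hD' : IsDomSet H D')
    {i : Fin t} (hD'D : D' ⊆ {w : W | ∃ x ∈ closedNbhd G (u i), (x, w) ∈ D})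
    {x : V} (hx : x ∈ closedNbhd G (u i)) {v : W} (hv : v ∉ D') :
    IsDomSet (strongProd G H) (D \ {(x, v)}) := by
  rw [isDomSet_iff_forall_exists_eq_or_adj]
  rintro ⟨a, b⟩
  obtain ⟨j, ha, -⟩ := hG.2 a
  obtain ⟨y, hy, w, hyw, hwb, hne⟩ :=
    hG.exists_mem_ne_of_isDomSet_subset hD hD' hD'D hx hv j b
  have hya : y = a ∨ G.Adj y a := by
    by_cases h : y = a
    · exact Or.inl h
    · exact Or.inr (hG.1 j hy ha h)
  exact ⟨(y, w), ⟨hyw, hne⟩, strongProd_eq_or_adj_iff.mpr ⟨hya, hwb⟩⟩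

end TriviallyWellDominatedWith

theorem stmt1_general (G : SimpleGraph V) (H : SimpleGraph W)
    {t : ℕ} (u : Fin t → V) (hG : TriviallyWellDominatedWith G u)
    (D : Set (V × W)) (hD : IsMinlDomSet (strongProd G H) D)
    (i : Fin t) :
    IsMinlDomSet H {v : W | ∃ x ∈ closedNbhd G (u i), (x, v) ∈ D} := by
  refine ⟨hD.1.slice_closedNbhd (u i), fun D' hD'D hD' => ?_⟩
  obtain ⟨v, ⟨x, hx, hxv⟩, hv⟩ := Set.exists_of_ssubset hD'D
  exact hD.2 _ (Set.sdiff_singleton_ssubset.mpr hxv)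
    (hG.isDomSet_diff_singleton hD.1 hD' hD'D.subset hx hv)

theorem stmt1 [Fintype V] [Fintype W] (G : SimpleGraph V) (H : SimpleGraph W)
    {t : ℕ} (u : Fin t → V) (hG : TriviallyWellDominatedWith G u)
    (hH : WellDominated H) (D : Set (V × W)) (hD : IsMinlDomSet (strongProd G H) D)
    (i : Fin t) :
    IsMinlDomSet H {v : W | ∃ x ∈ closedNbhd G (u i), (x, v) ∈ D} :=
  stmt1_general G H u hG D hD i
end

section
/- The strong product of two nontrivial connected graphs is well-edge-dominated if and only if both factors are isomorphic to K_2 (a single edge). -/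
open SimpleGraph

variable {V : Type*} {W : Type*}

/-!
In a well-edge-dominated graph every maximal matching `M` is a minimal edge dominating set, so all
maximal matchings have the same size. Trading an edge `x y` of `M` for an edge `z x` to an
unmatched vertex `z` then gives a maximal matching again, so the two ends of a matching edge never
have distinct unmatched neighbours. This rules out two configurations. A `6`-clique matched in
three pairs by `M` can be traded for a star of four edges which is a minimal edge dominating set
larger than `M`; since `K₃ ⊠ K₂ = K₆`, both factors of a well-edge-dominated `G ⊠ H` are
triangle-free. An induced path `a b c` of `G` times an edge `d e` of the triangle-free `H` gives
three matched fibres over `d e` that can be traded for two edges, an edge dominating set smaller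
than `M`. A connected graph on at least three vertices has a triangle or an induced path of
length two, so both factors are `K₂`; conversely `K₂ ⊠ K₂ = K₄` is well-edge-dominated.
-/

section EdgeDomination

variable {X : Type*} {Γ : SimpleGraph X} {M N F : Set (Sym2 X)} {e g : Sym2 X} {v x y z z' : X}

lemma mem_mVerts_insert : v ∈ mVerts (insert e M) ↔ v ∈ e ∨ v ∈ mVerts M := by
  simp [mVerts]

lemma mVerts_mono (h : M ⊆ N) : mVerts M ⊆ mVerts N :=
  fun _ ⟨e, he, hv⟩ => ⟨e, h he, hv⟩

lemma ncard_insert_of_notMem_mVerts [Finite X] (hx : x ∉ mVerts M) :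
    (insert s(x, y) M).ncard = M.ncard + 1 :=
  Set.ncard_insert_of_notMem fun h => hx ⟨_, h, Sym2.mem_mk_left x y⟩

lemma isMatchingSet_singleton (h : Γ.Adj x y) : IsMatchingSet Γ {s(x, y)} :=
  ⟨Set.singleton_subset_iff.2 h, fun _ he _ hg hne => absurd (he.trans hg.symm) hne⟩

namespace IsMatchingSet

lemma eq_of_mem_of_mem (hM : IsMatchingSet Γ M) (he : e ∈ M) (hg : g ∈ M) (hve : v ∈ e)
    (hvg : v ∈ g) : e = g :=
  by_contra fun hne => hM.2 e he g hg hne v ⟨hve, hvg⟩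

lemma notMem_mVerts_sdiff_singleton (hM : IsMatchingSet Γ M) (he : e ∈ M) (hv : v ∈ e) :
    v ∉ mVerts (M \ {e}) :=
  fun ⟨_, ⟨hg, hge⟩, hvg⟩ => hge (hM.eq_of_mem_of_mem hg he hvg hv)

lemma mono (hM : IsMatchingSet Γ M) (h : N ⊆ M) : IsMatchingSet Γ N :=
  ⟨h.trans hM.1, fun e he g hg => hM.2 e (h he) g (h hg)⟩

lemma insert (hM : IsMatchingSet Γ M) (hxy : Γ.Adj x y) (hx : x ∉ mVerts M)
    (hy : y ∉ mVerts M) : IsMatchingSet Γ (insert s(x, y) M) := by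
  have hnew : ∀ g ∈ M, ∀ v ∈ s(x, y), v ∉ g := by
    intro g hg v hv hvg
    rcases Sym2.mem_iff.1 hv with rfl | rfl
    exacts [hx ⟨g, hg, hvg⟩, hy ⟨g, hg, hvg⟩]
  refine ⟨Set.insert_subset hxy hM.1, ?_⟩
  rintro e (rfl | he) g (rfl | hg) hne v ⟨hve, hvg⟩
  · exact hne rfl
  · exact hnew g hg v hve hvg
  · exact hnew e he v hvg hve
  · exact hM.2 e he g hg hne v ⟨hve, hvg⟩

lemma notMem_of_mem_sdiff {S : Set (Sym2 X)} (hM : IsMatchingSet Γ M) (hSM : S ⊆ M)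
    (hg : g ∈ M \ S) (he : e ∈ S) (hv : v ∈ e) : v ∉ g :=
  fun hvg => hg.2 (hM.eq_of_mem_of_mem hg.1 (hSM he) hvg hv ▸ he)

lemma exists_isMaxlMatching [Finite X] (hM : IsMatchingSet Γ M) :
    ∃ N, M ⊆ N ∧ IsMaxlMatching Γ N := by
  obtain ⟨N, ⟨hN, hMN⟩, hmax⟩ := Set.Finite.exists_maximalFor id
    {N | IsMatchingSet Γ N ∧ M ⊆ N} (Set.toFinite _) ⟨M, hM, subset_rfl⟩
  exact ⟨N, hMN, hN, fun N' hNN' hN' => (hmax ⟨hN', hMN.trans hNN'⟩ hNN').antisymm hNN'⟩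

end IsMatchingSet

lemma isEDS_of_forall_adj (hF : F ⊆ Γ.edgeSet)
    (h : ∀ x y, Γ.Adj x y → x ∈ mVerts F ∨ y ∈ mVerts F) : IsEDS Γ F := by
  refine ⟨hF, fun e he _ => ?_⟩
  induction e using Sym2.ind with
  | _ x y =>
    rcases h x y he with ⟨f, hf, hx⟩ | ⟨f, hf, hy⟩
    exacts [⟨f, hf, x, Sym2.mem_mk_left x y, hx⟩, ⟨f, hf, y, Sym2.mem_mk_right x y, hy⟩]

lemma isMinlEDS_of_private (hF : IsEDS Γ F)
    (hpriv : ∀ g ∈ F, ∃ e ∈ Γ.edgeSet, ∀ f ∈ F, f ≠ g → ∀ v ∈ e, v ∉ f) : IsMinlEDS Γ F := by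
  refine ⟨hF, fun F' hF' hEDS => ?_⟩
  obtain ⟨g, hgF, hgF'⟩ := Set.exists_of_ssubset hF'
  obtain ⟨e, he, hpr⟩ := hpriv g hgF
  obtain ⟨f, hf, v, hve, hvf⟩ : ∃ f ∈ F', ∃ v ∈ e, v ∈ f := by
    by_cases heF' : e ∈ F'
    · induction e using Sym2.ind with
      | _ x y => exact ⟨_, heF', x, Sym2.mem_mk_left x y, Sym2.mem_mk_left x y⟩
    · exact hEDS.2 e he heF'
  exact hpr f (hF'.1 hf) (fun h => hgF' (h ▸ hf)) v hve hvf

namespace IsMaxlMatching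

lemma mem_mVerts_or (hM : IsMaxlMatching Γ M) (h : Γ.Adj x y) :
    x ∈ mVerts M ∨ y ∈ mVerts M := by
  by_contra! hc
  have hins := hM.2 _ (Set.subset_insert _ _) (hM.1.insert h hc.1 hc.2)
  exact hc.1 ⟨_, hins ▸ Set.mem_insert _ _, Sym2.mem_mk_left x y⟩

lemma isEDS (hM : IsMaxlMatching Γ M) : IsEDS Γ M :=
  isEDS_of_forall_adj hM.1.1 fun _ _ => hM.mem_mVerts_or

lemma isMinlEDS (hM : IsMaxlMatching Γ M) : IsMinlEDS Γ M :=
  isMinlEDS_of_private hM.isEDS fun g hg =>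
    ⟨g, hM.1.1 hg, fun f hf hfg v hvg hvf => hM.1.2 f hf g hg hfg v ⟨hvf, hvg⟩⟩

end IsMaxlMatching

namespace WellEdgeDominated

lemma ncard_le_of_isEDS (hW : WellEdgeDominated Γ) (hM : IsMaxlMatching Γ M) (hF : IsEDS Γ F) :
    M.ncard ≤ F.ncard :=
  hW M F hM.isMinlEDS hF

lemma ncard_le_of_isMinlEDS (hW : WellEdgeDominated Γ) (hM : IsMaxlMatching Γ M)
    (hF : IsMinlEDS Γ F) : F.ncard ≤ M.ncard :=
  hW F M hF hM.isEDS

lemma ncard_le_of_isMatchingSet [Finite X] (hW : WellEdgeDominated Γ) (hM : IsMaxlMatching Γ M)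
    (hN : IsMatchingSet Γ N) : N.ncard ≤ M.ncard := by
  obtain ⟨N', hNN', hN'⟩ := hN.exists_isMaxlMatching
  exact (Set.ncard_le_ncard hNN').trans (hW.ncard_le_of_isMinlEDS hM hN'.isMinlEDS)

lemma isMaxlMatching_of_ncard_le [Finite X] (hW : WellEdgeDominated Γ) (hM : IsMaxlMatching Γ M)
    (hN : IsMatchingSet Γ N) (h : M.ncard ≤ N.ncard) : IsMaxlMatching Γ N :=
  ⟨hN, fun _ hNN' hN' =>
    (Set.eq_of_subset_of_ncard_le hNN' ((hW.ncard_le_of_isMatchingSet hM hN').trans h)).symm⟩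

lemma isMaxlMatching_exchange [Finite X] (hW : WellEdgeDominated Γ) (hM : IsMaxlMatching Γ M)
    (he : s(x, y) ∈ M) (hz : z ∉ mVerts M) (hzx : Γ.Adj z x) :
    IsMaxlMatching Γ (insert s(z, x) (M \ {s(x, y)})) := by
  have hx := hM.1.notMem_mVerts_sdiff_singleton he (Sym2.mem_mk_left x y)
  have hz' : z ∉ mVerts (M \ {s(x, y)}) := fun h => hz (mVerts_mono Set.sdiff_subset h)
  refine hW.isMaxlMatching_of_ncard_le hM ((hM.1.mono Set.sdiff_subset).insert hzx hz' hx) ?_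
  rw [ncard_insert_of_notMem_mVerts hz', Set.ncard_sdiff_singleton_add_one he]

/-- Otherwise `z x y z'` would be an augmenting path. -/
lemma eq_of_adj_of_adj [Finite X] (hW : WellEdgeDominated Γ) (hM : IsMaxlMatching Γ M)
    (he : s(x, y) ∈ M) (hz : z ∉ mVerts M) (hz' : z' ∉ mVerts M) (hzx : Γ.Adj z x)
    (hz'y : Γ.Adj z' y) : z = z' := by
  by_contra hne
  have hx : x ∈ mVerts M := ⟨_, he, Sym2.mem_mk_left x y⟩
  have hy : y ∈ mVerts M := ⟨_, he, Sym2.mem_mk_right x y⟩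
  rcases (hW.isMaxlMatching_exchange hM he hz hzx).mem_mVerts_or hz'y with h | h <;>
    rw [mem_mVerts_insert, Sym2.mem_iff] at h
  · rcases h with (rfl | rfl) | h
    · exact hne rfl
    · exact hz' hx
    · exact hz' (mVerts_mono Set.sdiff_subset h)
  · rcases h with (rfl | rfl) | h
    · exact hz hy
    · exact (hM.1.1 he).ne rfl
    · exact hM.1.notMem_mVerts_sdiff_singleton he (Sym2.mem_mk_right x y) h

lemma exists_forall_not_adj [Finite X] (hW : WellEdgeDominated Γ) (hM : IsMaxlMatching Γ M)
    (he : e ∈ M) (h : ∀ z ∉ mVerts M, ∃ x ∈ e, ¬ Γ.Adj z x) :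
    ∃ x y, e = s(x, y) ∧ ∀ z ∉ mVerts M, ¬ Γ.Adj z x := by
  induction e using Sym2.ind with
  | _ x y =>
    by_cases hx : ∃ z ∉ mVerts M, Γ.Adj z x
    · obtain ⟨z, hz, hzx⟩ := hx
      refine ⟨y, x, Sym2.eq_swap, fun z' hz' hz'y => ?_⟩
      obtain rfl := hW.eq_of_adj_of_adj hM he hz hz' hzx hz'y
      obtain ⟨u, hu, hzu⟩ := h z hz
      rcases Sym2.mem_iff.1 hu with rfl | rfl
      exacts [hzu hzx, hzu hz'y]
    · push Not at hx
      exact ⟨x, y, rfl, hx⟩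

end WellEdgeDominated

end EdgeDomination

section Iso

variable {X Y : Type*} {Γ : SimpleGraph X} {Δ : SimpleGraph Y} {F : Set (Sym2 X)}

lemma IsEDS.image (φ : Γ ≃g Δ) (hF : IsEDS Γ F) : IsEDS Δ (Sym2.map φ '' F) := by
  refine ⟨?_, fun e he heF => ?_⟩
  · rintro _ ⟨f, hf, rfl⟩
    exact φ.map_mem_edgeSet_iff.2 (hF.1 hf)
  · have hpre : Sym2.map φ (Sym2.map φ.symm e) = e := by
      simp [Sym2.map_map]
    obtain ⟨f, hf, v, hve, hvf⟩ := hF.2 (Sym2.map φ.symm e) (φ.symm.map_mem_edgeSet_iff.2 he)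
      fun h => heF ⟨_, h, hpre⟩
    refine ⟨_, ⟨f, hf, rfl⟩, φ v, ?_, Sym2.mem_map.2 ⟨v, hvf, rfl⟩⟩
    rw [← hpre]
    exact Sym2.mem_map.2 ⟨v, hve, rfl⟩

lemma IsMinlEDS.image (φ : Γ ≃g Δ) (hF : IsMinlEDS Γ F) : IsMinlEDS Δ (Sym2.map φ '' F) := by
  refine ⟨hF.1.image φ, fun F' hF' hEDS => hF.2 _ ?_ (hEDS.image φ.symm)⟩
  simpa [Set.image_image, Sym2.map_map, Function.comp_def] using
    (Sym2.map.injective φ.symm.injective).image_strictMono hF'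

lemma WellEdgeDominated.of_iso (φ : Γ ≃g Δ) (hW : WellEdgeDominated Γ) :
    WellEdgeDominated Δ := by
  intro F F' hF hF'
  have hinj := Sym2.map.injective φ.symm.injective
  simpa only [Set.ncard_image_of_injective _ hinj] using hW _ _ (hF.image φ.symm) (hF'.image φ.symm)

end Iso

section SixClique

variable {X : Type*} {Γ : SimpleGraph X} {M : Set (Sym2 X)} {w : X} (f : Fin 6 → X)

def pairEdges : Set (Sym2 X) := {s(f 0, f 1), s(f 2, f 3), s(f 4, f 5)}

def starEdges (w : X) : Set (Sym2 X) := {s(f 0, f 1), s(f 0, f 2), s(f 0, f 3), s(w, f 4)}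

def starExchange (M : Set (Sym2 X)) (w : X) : Set (Sym2 X) :=
  starEdges f w ∪ M \ pairEdges f

lemma exists_mem_pairEdges (i : Fin 6) : ∃ e ∈ pairEdges f, f i ∈ e := by
  fin_cases i <;> simp [pairEdges]

lemma IsMatchingSet.apply_notMem_of_mem_sdiff (hM : IsMatchingSet Γ M) (hpairs : pairEdges f ⊆ M) :
    ∀ g ∈ M \ pairEdges f, ∀ i, f i ∉ g := by
  intro g hg i
  obtain ⟨e, he, hie⟩ := exists_mem_pairEdges f i
  exact hM.notMem_of_mem_sdiff hpairs hg he hie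

lemma ne_apply_and_notMem_sdiff (hM : IsMatchingSet Γ M) (hf : Function.Injective f)
    (hpairs : pairEdges f ⊆ M) (hw : w = f 0 ∨ w ∉ mVerts M) :
    (∀ i, i ≠ 0 → w ≠ f i) ∧ ∀ g ∈ M \ pairEdges f, w ∉ g := by
  rcases hw with rfl | hw
  · exact ⟨fun i hi h => hi (hf h).symm, fun g hg => hM.apply_notMem_of_mem_sdiff f hpairs g hg 0⟩
  · refine ⟨?_, fun g hg hwg => hw ⟨g, hg.1, hwg⟩⟩
    rintro i - rfl
    obtain ⟨e, he, hie⟩ := exists_mem_pairEdges f i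
    exact hw ⟨e, hpairs he, hie⟩

lemma IsMaxlMatching.isEDS_starExchange (hM : IsMaxlMatching Γ M)
    (hstar : starEdges f w ⊆ Γ.edgeSet) (h5 : ∀ z ∉ mVerts M, Γ.Adj z (f 5) → z = w) :
    IsEDS Γ (starExchange f M w) := by
  have hunc : ∀ v ∉ mVerts (starExchange f M w), v = f 5 ∨ (v ∉ mVerts M ∧ v ≠ w) := by
    intro v hv
    have hvR : ∀ g ∈ starEdges f w, v ∉ g := fun g hg hvg => hv ⟨g, Or.inl hg, hvg⟩
    by_cases hvM : v ∈ mVerts M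
    · obtain ⟨g, hgM, hvg⟩ := hvM
      by_cases hgS : g ∈ pairEdges f
      · simp only [pairEdges, Set.mem_insert_iff, Set.mem_singleton_iff] at hgS
        rcases hgS with rfl | rfl | rfl <;> rcases Sym2.mem_iff.1 hvg with rfl | rfl <;>
          first | exact Or.inl rfl | simp [starEdges] at hvR
      · exact absurd ⟨g, Or.inr ⟨hgM, hgS⟩, hvg⟩ hv
    · exact Or.inr ⟨hvM, fun h => hvR s(w, f 4) (by simp [starEdges]) (h ▸ Sym2.mem_mk_left _ _)⟩
  refine isEDS_of_forall_adj (Set.union_subset hstar (Set.sdiff_subset.trans hM.1.1)) ?_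
  intro x y hxy
  by_contra! hc
  rcases hunc x hc.1 with rfl | ⟨hx, hxw⟩ <;> rcases hunc y hc.2 with rfl | ⟨hy, hyw⟩
  · exact hxy.ne rfl
  · exact hyw (h5 y hy hxy.symm)
  · exact hxw (h5 x hx hxy)
  · exact (hM.mem_mVerts_or hxy).elim hx hy

/-- The private edges are `f i f 5` for the four star edges, and each other edge for itself. -/
lemma IsMaxlMatching.isMinlEDS_starExchange (hM : IsMaxlMatching Γ M) (hf : Function.Injective f)
    (hadj : ∀ i j, i ≠ j → Γ.Adj (f i) (f j)) (hpairs : pairEdges f ⊆ M)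
    (hw : w = f 0 ∨ w ∉ mVerts M) (hw4 : Γ.Adj w (f 4))
    (h5 : ∀ z ∉ mVerts M, Γ.Adj z (f 5) → z = w) : IsMinlEDS Γ (starExchange f M w) := by
  have hfN := hM.1.apply_notMem_of_mem_sdiff f hpairs
  obtain ⟨hwf, hwN⟩ := ne_apply_and_notMem_sdiff f hM.1 hf hpairs hw
  have hstar : starEdges f w ⊆ Γ.edgeSet := by
    simp [starEdges, Set.insert_subset_iff, hadj, hw4]
  refine isMinlEDS_of_private (hM.isEDS_starExchange f hstar h5) ?_
  rintro g (hg | hg)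
  · simp only [starEdges, Set.mem_insert_iff, Set.mem_singleton_iff] at hg
    rcases hg with rfl | rfl | rfl | rfl <;>
      [refine ⟨s(f 1, f 5), hadj 1 5 (by decide), ?_⟩;
       refine ⟨s(f 2, f 5), hadj 2 5 (by decide), ?_⟩;
       refine ⟨s(f 3, f 5), hadj 3 5 (by decide), ?_⟩;
       refine ⟨s(f 4, f 5), hadj 4 5 (by decide), ?_⟩] <;>
    rintro f' (hf' | hf') hf'g v hv hvf'
    all_goals first
      | (rcases Sym2.mem_iff.1 hv with rfl | rfl <;> exact hfN _ hf' _ hvf')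
      | (simp only [starEdges, Set.mem_insert_iff, Set.mem_singleton_iff] at hf'
         rcases hf' with rfl | rfl | rfl | rfl <;> first
           | exact hf'g rfl
           | (rcases Sym2.mem_iff.1 hv with rfl | rfl <;> rcases Sym2.mem_iff.1 hvf' with h | h <;>
              first | exact hf.ne (by decide) h | exact hwf _ (by decide) h.symm))
  · refine ⟨g, hM.1.1 hg.1, ?_⟩
    rintro f' (hf' | hf') hf'g v hvg hvf'
    · simp only [starEdges, Set.mem_insert_iff, Set.mem_singleton_iff] at hf'
      rcases hf' with rfl | rfl | rfl | rfl <;> rcases Sym2.mem_iff.1 hvf' with rfl | rfl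
      all_goals first | exact hfN _ hg _ hvg | exact hwN g hg hvg
    · exact hM.1.2 f' hf'.1 g hg.1 hf'g v ⟨hvf', hvg⟩

lemma ncard_starExchange [Finite X] (hM : IsMatchingSet Γ M) (hf : Function.Injective f)
    (hpairs : pairEdges f ⊆ M) : (starExchange f M w).ncard = M.ncard + 1 := by
  have hfN := hM.apply_notMem_of_mem_sdiff f hpairs
  have hdisj : Disjoint (starEdges f w) (M \ pairEdges f) := by
    simp only [starEdges, Set.disjoint_left, Set.mem_insert_iff, Set.mem_singleton_iff]
    rintro g (rfl | rfl | rfl | rfl) hg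
    exacts [hfN _ hg 0 (Sym2.mem_mk_left _ _), hfN _ hg 0 (Sym2.mem_mk_left _ _),
      hfN _ hg 0 (Sym2.mem_mk_left _ _), hfN _ hg 4 (Sym2.mem_mk_right _ _)]
  rw [starExchange, Set.ncard_union_eq hdisj,
    ← Set.ncard_sdiff_add_ncard_of_subset hpairs M.toFinite, starEdges, pairEdges]
  rw [Set.ncard_insert_of_notMem, Set.ncard_insert_of_notMem, Set.ncard_pair,
    Set.ncard_insert_of_notMem, Set.ncard_insert_of_notMem, Set.ncard_singleton]
  · omega
  all_goals simp [hf.eq_iff]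

lemma IsMaxlMatching.not_wellEdgeDominated_of_star [Finite X] (hM : IsMaxlMatching Γ M)
    (hf : Function.Injective f) (hadj : ∀ i j, i ≠ j → Γ.Adj (f i) (f j))
    (hpairs : pairEdges f ⊆ M) (hw : w = f 0 ∨ w ∉ mVerts M) (hw4 : Γ.Adj w (f 4))
    (h5 : ∀ z ∉ mVerts M, Γ.Adj z (f 5) → z = w) : ¬ WellEdgeDominated Γ := fun hW => by
  have := hW.ncard_le_of_isMinlEDS hM (hM.isMinlEDS_starExchange f hf hadj hpairs hw hw4 h5)
  rw [ncard_starExchange f hM.1 hf hpairs] at this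
  omega

theorem WellEdgeDominated.cliqueFree_six [Finite X] (hW : WellEdgeDominated Γ) :
    Γ.CliqueFree 6 := by
  by_contra h
  let φ := topEmbeddingOfNotCliqueFree h
  have hadj : ∀ i j, i ≠ j → Γ.Adj (φ i) (φ j) := fun i j hij => φ.map_adj_iff.2 hij
  have hpairs : IsMatchingSet Γ (pairEdges φ) := by
    refine ((isMatchingSet_singleton (hadj 4 5 (by decide))).insert (hadj 2 3 (by decide)) ?_ ?_
      |>.insert (hadj 0 1 (by decide)) ?_ ?_) <;> simp [mVerts]
  obtain ⟨M, hpM, hM⟩ := hpairs.exists_isMaxlMatching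
  by_cases h4 : ∃ z ∉ mVerts M, Γ.Adj z (φ 4)
  · obtain ⟨z, hz, hz4⟩ := h4
    have h45 : s(φ 4, φ 5) ∈ M := hpM (by simp [pairEdges])
    exact hM.not_wellEdgeDominated_of_star φ φ.injective hadj hpM (Or.inr hz) hz4
      (fun z' hz' hz'5 => (hW.eq_of_adj_of_adj hM h45 hz hz' hz4 hz'5).symm) hW
  · push Not at h4
    have hswap : pairEdges (φ ∘ Equiv.swap 4 5) = pairEdges φ := by
      simp [pairEdges, Equiv.swap_apply_of_ne_of_ne, Sym2.eq_swap]
    refine hM.not_wellEdgeDominated_of_star (φ ∘ Equiv.swap 4 5)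
      (φ.injective.comp (Equiv.injective _)) (fun i j h => hadj _ _ ((Equiv.injective _).ne h))
      (hswap ▸ hpM) (Or.inl rfl) (hadj 0 5 (by decide)) (fun z hz hz4 => absurd hz4 (h4 z hz)) hW

end SixClique

section InducedPath

variable {X : Type*} {Γ : SimpleGraph X} {M : Set (Sym2 X)}

lemma IsMaxlMatching.exists_isEDS_ncard_lt [Finite X] (hM : IsMaxlMatching Γ M)
    {a a' b b' c c' : X} (ha : s(a, a') ∈ M) (hb : s(b, b') ∈ M) (hc : s(c, c') ∈ M)
    (hab : s(a, a') ≠ s(b, b')) (hac : s(a, a') ≠ s(c, c')) (hbc : s(b, b') ≠ s(c, c'))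
    (ha'b : Γ.Adj a' b) (hb'c' : Γ.Adj b' c') (hnac : ¬ Γ.Adj a c)
    (hna : ∀ z ∉ mVerts M, ¬ Γ.Adj z a) (hnc : ∀ z ∉ mVerts M, ¬ Γ.Adj z c) :
    ∃ F, IsEDS Γ F ∧ F.ncard < M.ncard := by
  set S : Set (Sym2 X) := {s(a, a'), s(b, b'), s(c, c')} with hS
  have hSM : S ⊆ M := by simp [hS, Set.insert_subset_iff, ha, hb, hc]
  set F := insert s(a', b) (insert s(b', c') (M \ S)) with hF
  have hunc : ∀ v ∉ mVerts F, v ∉ mVerts M ∨ v = a ∨ v = c := by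
    intro v hv
    simp only [hF, mem_mVerts_insert, Sym2.mem_iff, not_or] at hv
    by_cases hvM : v ∈ mVerts M
    swap
    · exact Or.inl hvM
    obtain ⟨g, hgM, hvg⟩ := hvM
    by_cases hgS : g ∈ S
    · simp only [hS, Set.mem_insert_iff, Set.mem_singleton_iff] at hgS
      rcases hgS with rfl | rfl | rfl <;> rcases Sym2.mem_iff.1 hvg with rfl | rfl <;> tauto
    · exact absurd ⟨g, ⟨hgM, hgS⟩, hvg⟩ hv.2.2
  refine ⟨F, isEDS_of_forall_adj ?_ ?_, ?_⟩
  · exact Set.insert_subset ha'b (Set.insert_subset hb'c' (Set.sdiff_subset.trans hM.1.1))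
  · intro x y hxy
    by_contra! hc
    rcases hunc x hc.1 with hx | rfl | rfl <;> rcases hunc y hc.2 with hy | rfl | rfl
    · exact (hM.mem_mVerts_or hxy).elim hx hy
    · exact hna x hx hxy
    · exact hnc x hx hxy
    · exact hna y hy hxy.symm
    · exact hxy.ne rfl
    · exact hnac hxy
    · exact hnc y hy hxy.symm
    · exact hnac hxy.symm
    · exact hxy.ne rfl
  · have hS3 : S.ncard = 3 := Set.ncard_eq_three.2 ⟨_, _, _, hab, hac, hbc, rfl⟩
    have := Set.ncard_sdiff_add_ncard_of_subset hSM
    have : F.ncard ≤ (M \ S).ncard + 2 := (Set.ncard_insert_le _ _).trans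
      (Nat.add_le_add_right (Set.ncard_insert_le _ _) 1)
    omega

lemma IsMaxlMatching.not_wellEdgeDominated_of_path [Finite X] (hM : IsMaxlMatching Γ M)
    {eA eB eC : Sym2 X} (hA : eA ∈ M) (hB : eB ∈ M) (hC : eC ∈ M)
    (hAB : ∀ x ∈ eA, ∀ y ∈ eB, Γ.Adj x y) (hBC : ∀ x ∈ eB, ∀ y ∈ eC, Γ.Adj x y)
    (hAC : ∀ x ∈ eA, ∀ y ∈ eC, ¬ Γ.Adj x y) (hA' : ∀ z ∉ mVerts M, ∃ x ∈ eA, ¬ Γ.Adj z x)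
    (hC' : ∀ z ∉ mVerts M, ∃ x ∈ eC, ¬ Γ.Adj z x) : ¬ WellEdgeDominated Γ := by
  intro hW
  obtain ⟨a, a', rfl, hna⟩ := hW.exists_forall_not_adj hM hA hA'
  obtain ⟨c, c', rfl, hnc⟩ := hW.exists_forall_not_adj hM hC hC'
  induction eB using Sym2.ind with
  | _ b b' =>
    obtain ⟨F, hF, hlt⟩ := hM.exists_isEDS_ncard_lt hA hB hC
      (fun h => (hAB a (by simp) a (h ▸ Sym2.mem_mk_left a a')).ne rfl)
      (fun h => hAC a (by simp) a' (h ▸ Sym2.mem_mk_right a a') (hM.1.1 hA))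
      (fun h => (hBC b (by simp) b (h ▸ Sym2.mem_mk_left b b')).ne rfl)
      (hAB a' (by simp) b (by simp)) (hBC b' (by simp) c' (by simp))
      (hAC a (by simp) c (by simp)) hna hnc
    exact (hW.ncard_le_of_isEDS hM hF).not_gt hlt

end InducedPath

section StrongProduct

variable {G : SimpleGraph V} {H : SimpleGraph W}

def strongProdComm (G : SimpleGraph V) (H : SimpleGraph W) : strongProd G H ≃g strongProd H G where
  toEquiv := Equiv.prodComm V W
  map_rel_iff' := by
    rintro ⟨a, b⟩ ⟨c, d⟩
    simp only [strongProd, Equiv.prodComm_apply, Prod.swap_prod_mk, ne_eq, Prod.mk.injEq]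
    tauto

lemma isNClique_strongProd {m n : ℕ} {s : Finset V} {t : Finset W} (hs : G.IsNClique m s)
    (ht : H.IsNClique n t) : (strongProd G H).IsNClique (m * n) (s ×ˢ t) := by
  refine ⟨fun x hx y hy hne => ⟨hne, ?_, ?_⟩, by rw [Finset.card_product, hs.card_eq, ht.card_eq]⟩
  all_goals simp only [Finset.coe_product, Set.mem_prod, Finset.mem_coe] at hx hy
  · exact (eq_or_ne x.1 y.1).imp_right (hs.isClique hx.1 hy.1)
  · exact (eq_or_ne x.2 y.2).imp_right (ht.isClique hx.2 hy.2)

lemma not_cliqueFree_strongProd {m n : ℕ} (hG : ¬ G.CliqueFree m) (hH : ¬ H.CliqueFree n) :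
    ¬ (strongProd G H).CliqueFree (m * n) := by
  obtain ⟨s, hs⟩ : ∃ s, G.IsNClique m s := by simpa [CliqueFree] using hG
  obtain ⟨t, ht⟩ : ∃ t, H.IsNClique n t := by simpa [CliqueFree] using hH
  exact (isNClique_strongProd hs ht).not_cliqueFree

lemma strongProd_top_top : strongProd (⊤ : SimpleGraph V) (⊤ : SimpleGraph W) = ⊤ := by
  ext x y
  simp only [strongProd, top_adj]
  tauto

lemma mem_sym2_prod_iff {v : V} {d e : W} {x : V × W} :
    x ∈ s((v, d), (v, e)) ↔ x.1 = v ∧ (x.2 = d ∨ x.2 = e) := by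
  obtain ⟨x1, x2⟩ := x
  simp only [Sym2.mem_iff, Prod.mk.injEq]
  tauto

lemma not_wellEdgeDominated_strongProd [Finite V] [Finite W] {a b c : V} {d e : W}
    (hba : G.Adj b a) (hbc : G.Adj b c) (hac : a ≠ c) (hnac : ¬ G.Adj a c) (hde : H.Adj d e)
    (hH : H.CliqueFree 3) : ¬ WellEdgeDominated (strongProd G H) := by
  classical
  have hfib : ∀ u v, G.Adj u v → ∀ x ∈ s((u, d), (u, e)), ∀ y ∈ s((v, d), (v, e)),
      (strongProd G H).Adj x y := by
    intro u v huv x hx y hy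
    rw [mem_sym2_prod_iff] at hx hy
    refine ⟨fun h => huv.ne (hx.1 ▸ hy.1 ▸ congrArg Prod.fst h), Or.inr (hx.1 ▸ hy.1 ▸ huv), ?_⟩
    rcases hx.2 with h | h <;> rcases hy.2 with h' | h' <;> rw [h, h']
    exacts [Or.inl rfl, Or.inr hde, Or.inr hde.symm, Or.inl rfl]
  have hC : IsMatchingSet (strongProd G H) (Set.range fun v => s((v, d), (v, e))) := by
    refine ⟨?_, ?_⟩
    · rintro _ ⟨v, rfl⟩
      exact ⟨by simp [hde.ne], Or.inl rfl, Or.inr hde⟩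
    · rintro _ ⟨v, rfl⟩ _ ⟨v', rfl⟩ hne x ⟨hx, hx'⟩
      rw [mem_sym2_prod_iff] at hx hx'
      exact hne (by rw [← hx.1, ← hx'.1])
  obtain ⟨M, hCM, hM⟩ := hC.exists_isMaxlMatching
  have hblock : ∀ v, ∀ z ∉ mVerts M, ∃ x ∈ s((v, d), (v, e)), ¬ (strongProd G H).Adj z x := by
    intro v z hz
    by_contra! h
    have hzd := (h (v, d) (Sym2.mem_mk_left _ _)).2.2
    have hze := (h (v, e) (Sym2.mem_mk_right _ _)).2.2
    have hz2 : z.2 ≠ d ∧ z.2 ≠ e := by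
      constructor <;> intro h2 <;>
        exact hz ⟨_, hCM ⟨z.1, rfl⟩, mem_sym2_prod_iff.2 ⟨rfl, by simp [h2]⟩⟩
    exact hH {z.2, d, e}
      (is3Clique_triple_iff.2 ⟨hzd.resolve_left hz2.1, hze.resolve_left hz2.2, hde⟩)
  refine hM.not_wellEdgeDominated_of_path (hCM ⟨a, rfl⟩) (hCM ⟨b, rfl⟩) (hCM ⟨c, rfl⟩)
    (hfib a b hba.symm) (hfib b c hbc) ?_ (hblock a) (hblock c)
  intro x hx y hy hxy
  rw [mem_sym2_prod_iff] at hx hy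
  rcases hxy.2.1 with h | h
  · exact hac (hx.1 ▸ hy.1 ▸ h)
  · exact hnac (hx.1 ▸ hy.1 ▸ h)

end StrongProduct

section CompleteGraph

variable {X : Type*} {F : Set (Sym2 X)}

lemma ncard_mVerts_le [Finite X] (F : Set (Sym2 X)) : (mVerts F).ncard ≤ 2 * F.ncard := by
  induction F, F.toFinite using Set.Finite.induction_on with
  | empty => simp [mVerts]
  | @insert e F he _ ih =>
    induction e using Sym2.ind with
    | _ x y =>
      have hsub : mVerts (insert s(x, y) F) ⊆ insert x (insert y (mVerts F)) := fun v hv => by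
        simpa [mem_mVerts_insert, or_assoc] using hv
      have := (Set.ncard_insert_le x _).trans
        (Nat.add_le_add_right (Set.ncard_insert_le y (mVerts F)) 1)
      have := Set.ncard_le_ncard hsub
      rw [Set.ncard_insert_of_notMem he]
      omega

lemma isEDS_of_subsingleton_compl (Γ : SimpleGraph X) (hF : F ⊆ Γ.edgeSet)
    (h : (mVerts F)ᶜ.Subsingleton) : IsEDS Γ F :=
  isEDS_of_forall_adj hF fun _ _ hxy => by
    by_contra! hc
    exact hxy.ne (h hc.1 hc.2)

lemma IsEDS.subsingleton_compl_of_top (hF : IsEDS (⊤ : SimpleGraph X) F) :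
    (mVerts F)ᶜ.Subsingleton := by
  intro u hu v hv
  by_contra huv
  obtain ⟨f, hf, w, hw, hwf⟩ := hF.2 s(u, v) huv fun h => hu ⟨_, h, Sym2.mem_mk_left u v⟩
  rcases Sym2.mem_iff.1 hw with rfl | rfl
  exacts [hu ⟨f, hf, hwf⟩, hv ⟨f, hf, hwf⟩]

lemma Sym2.exists_mem_ne_ne {p q : X} {f : Sym2 X} (hf : ¬ f.IsDiag) (hne : f ≠ s(p, q)) :
    ∃ r ∈ f, r ≠ p ∧ r ≠ q := by
  induction f using Sym2.ind with
  | _ a b =>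
    by_contra! h
    have ha := h a (Sym2.mem_mk_left a b)
    have hb := h b (Sym2.mem_mk_right a b)
    rw [Sym2.mk_isDiag_iff] at hf
    by_cases hap : a = p <;> by_cases hbp : b = p <;> simp_all [Sym2.eq_swap]

/-- In `K₄` an edge dominating set covers at least three vertices, which takes two edges and which
any two edges achieve. -/
lemma wellEdgeDominated_top [Finite X] (h4 : Nat.card X = 4) :
    WellEdgeDominated (⊤ : SimpleGraph X) := by
  have hcov : ∀ {F : Set (Sym2 X)}, IsEDS ⊤ F → 3 ≤ (mVerts F).ncard := fun {F} hF => by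
    have := Set.ncard_add_ncard_compl (mVerts F)
    have := Set.ncard_le_one_iff_subsingleton.2 hF.subsingleton_compl_of_top
    omega
  intro F F' hF hF'
  have hF'2 : 2 ≤ F'.ncard := by
    have := hcov hF'
    have := ncard_mVerts_le F'
    omega
  suffices F.ncard ≤ 2 by omega
  by_contra! hgt
  obtain ⟨e, f, g, he, hf, hg, hef, heg, hfg⟩ := (Set.two_lt_ncard_iff F.toFinite).1 hgt
  have hsub : {e, f} ⊆ F := Set.insert_subset he (Set.singleton_subset_iff.2 hf)
  have hsub' : {e, f} ⊂ F := hsub.ssubset_of_ne fun h => by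
    rcases (h ▸ hg : g ∈ ({e, f} : Set _)) with rfl | rfl
    exacts [heg rfl, hfg rfl]
  refine hF.2 _ hsub' (isEDS_of_subsingleton_compl _ (hsub.trans hF.1.1) ?_)
  induction e using Sym2.ind with
  | _ p q =>
    have hpq : p ≠ q := hF.1.1 he
    obtain ⟨r, hr, hrp, hrq⟩ := Sym2.exists_mem_ne_ne (f := f)
      (SimpleGraph.not_isDiag_of_mem_edgeSet _ (hF.1.1 hf)) (Ne.symm hef)
    have h3 : 3 ≤ (mVerts {s(p, q), f}).ncard := by
      rw [← Set.ncard_eq_three.2 ⟨p, q, r, hpq, hrp.symm, hrq.symm, rfl⟩]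
      refine Set.ncard_le_ncard ?_
      rintro v (rfl | rfl | rfl)
      exacts [⟨_, Or.inl rfl, Sym2.mem_mk_left _ _⟩, ⟨_, Or.inl rfl, Sym2.mem_mk_right _ _⟩,
        ⟨_, Or.inr rfl, hr⟩]
    have := Set.ncard_add_ncard_compl (mVerts {s(p, q), f})
    exact Set.ncard_le_one_iff_subsingleton.1 (by omega)

end CompleteGraph

section Connected

variable {G : SimpleGraph V}

lemma SimpleGraph.Connected.exists_adj_of_mem_of_notMem (hG : G.Connected) {S : Set V} {u v : V}
    (hu : u ∈ S) (hv : v ∉ S) : ∃ x ∈ S, ∃ y ∉ S, G.Adj x y := by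
  obtain ⟨d, -, hd1, hd2⟩ := (hG.preconnected u v).some.exists_boundary_dart S hu hv
  exact ⟨_, hd1, _, hd2, d.adj⟩

lemma SimpleGraph.Connected.ne_bot [Fintype V] (hG : G.Connected) (h2 : 2 ≤ Fintype.card V) :
    G ≠ ⊥ := by
  obtain ⟨u, v, huv⟩ := Fintype.exists_pair_of_one_lt_card h2
  obtain ⟨x, -, y, -, hxy⟩ := hG.exists_adj_of_mem_of_notMem (S := {u}) rfl huv.symm
  exact ne_bot_iff_exists_adj.2 ⟨x, y, hxy⟩

lemma SimpleGraph.Connected.eq_top_of_card_eq_two [Fintype V] (hG : G.Connected)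
    (h2 : Fintype.card V = 2) : G = ⊤ := by
  ext u v
  refine ⟨Adj.ne, fun huv => ?_⟩
  obtain ⟨x, rfl, y, hy, hxy⟩ := hG.exists_adj_of_mem_of_notMem (S := {u}) rfl huv.symm
  obtain rfl : y = v := by
    by_contra hyv
    have := Fintype.two_lt_card_iff.2 ⟨x, v, y, huv, Ne.symm hy, fun h => hyv h.symm⟩
    omega
  exact hxy

lemma SimpleGraph.Connected.exists_adj_adj [Fintype V] (hG : G.Connected)
    (h3 : 2 < Fintype.card V) : ∃ a b c, G.Adj b a ∧ G.Adj b c ∧ a ≠ c := by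
  obtain ⟨u, v, w, huv, huw, hvw⟩ := Fintype.two_lt_card_iff.1 h3
  obtain ⟨x, rfl, y, hy, hxy⟩ := hG.exists_adj_of_mem_of_notMem (S := {u}) rfl huv.symm
  obtain ⟨z, hz⟩ : ∃ z, z ∉ ({x, y} : Set V) := by
    by_cases hvy : v = y
    · exact ⟨w, by simp [Ne.symm huw, hvy ▸ Ne.symm hvw]⟩
    · exact ⟨v, by simp [Ne.symm huv, hvy]⟩
  obtain ⟨b, hb, c, hc, hbc⟩ := hG.exists_adj_of_mem_of_notMem (S := {x, y}) (Set.mem_insert x _) hz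
  simp only [Set.mem_insert_iff, Set.mem_singleton_iff, not_or] at hb hc
  rcases hb with rfl | rfl
  exacts [⟨y, b, c, hxy, hbc, Ne.symm hc.2⟩, ⟨x, b, c, hxy.symm, hbc, Ne.symm hc.1⟩]

lemma nonempty_iso_top_iff [Fintype V] {n : ℕ} :
    Nonempty (G ≃g (⊤ : SimpleGraph (Fin n))) ↔ Fintype.card V = n ∧ G = ⊤ := by
  constructor
  · rintro ⟨φ⟩
    refine ⟨by simpa using Fintype.card_congr φ.toEquiv, ?_⟩
    ext u v
    rw [← φ.map_adj_iff]
    simp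
  · rintro ⟨h, rfl⟩
    exact ⟨Iso.completeGraph (Fintype.equivFinOfCardEq h)⟩

end Connected

lemma card_le_two_of_wellEdgeDominated [Fintype V] [Finite W] {G : SimpleGraph V}
    {H : SimpleGraph W} (hG : G.Connected) (hH : H ≠ ⊥)
    (hW : WellEdgeDominated (strongProd G H)) : Fintype.card V ≤ 2 := by
  classical
  by_contra! h3
  obtain ⟨a, b, c, hba, hbc, hac⟩ := hG.exists_adj_adj h3
  have h6 := hW.cliqueFree_six
  have hG3 : G.CliqueFree 3 := by_contra fun h =>
    not_cliqueFree_strongProd (n := 2) h (cliqueFree_two.not.2 hH) h6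
  have hG2 : ¬ G.CliqueFree 2 := cliqueFree_two.not.2 (ne_bot_iff_exists_adj.2 ⟨b, a, hba⟩)
  have hH3 : H.CliqueFree 3 := by_contra fun h => not_cliqueFree_strongProd hG2 h h6
  obtain ⟨d, e, hde⟩ := ne_bot_iff_exists_adj.1 hH
  have hnac : ¬ G.Adj a c := fun h => hG3 {a, b, c} (is3Clique_triple_iff.2 ⟨hba.symm, h, hbc⟩)
  exact not_wellEdgeDominated_strongProd hba hbc hac hnac hde hH3 hW

theorem stmt3 [Fintype V] [Fintype W] (G : SimpleGraph V) (H : SimpleGraph W)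
    (hGn : 2 ≤ Fintype.card V) (hHn : 2 ≤ Fintype.card W)
    (hGc : G.Connected) (hHc : H.Connected) :
    WellEdgeDominated (strongProd G H) ↔
      Nonempty (G ≃g (⊤ : SimpleGraph (Fin 2))) ∧
      Nonempty (H ≃g (⊤ : SimpleGraph (Fin 2))) := by
  rw [nonempty_iso_top_iff, nonempty_iso_top_iff]
  constructor
  · intro hW
    have hV := (card_le_two_of_wellEdgeDominated hGc (hHc.ne_bot hHn) hW).antisymm hGn
    have hW' := (card_le_two_of_wellEdgeDominated hHc (hGc.ne_bot hGn)
      (hW.of_iso (strongProdComm G H))).antisymm hHn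
    exact ⟨⟨hV, hGc.eq_top_of_card_eq_two hV⟩, hW', hHc.eq_top_of_card_eq_two hW'⟩
  · rintro ⟨⟨hV, rfl⟩, hW, rfl⟩
    rw [strongProd_top_top]
    exact wellEdgeDominated_top (by rw [Nat.card_eq_fintype_card, Fintype.card_prod, hV, hW])
end

section
/- If M is a matching of a graph G and G is equimatchable, then the induced subgraph G − V(M) is equimatchable. -/
open SimpleGraph

variable {V : Type*} {W : Type*}

/-!
Extending `M` by matchings of `G - V(M)` identifies the matchings of `G - V(M)` with the
matchings of `G` containing `M`, and maximal ones with maximal ones: an edge that could be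
added to `M ∪ N` misses `V(M)`, so it would extend `N` inside `G - V(M)`. Since `M ∪ N` and
`M ∪ N'` differ by `|N| - |N'|` edges, equimatchability of `G` passes to `G - V(M)`.
-/

section Matching

variable {G : SimpleGraph V} {H : SimpleGraph W}

lemma IsMatchingSet.image_embedding {N : Set (Sym2 W)} (hN : IsMatchingSet H N) (φ : H ↪g G) :
    IsMatchingSet G (Sym2.map φ '' N) := by
  refine ⟨?_, ?_⟩
  · rintro _ ⟨e, he, rfl⟩
    exact φ.map_mem_edgeSet_iff.2 (hN.1 he)
  · rintro _ ⟨e, he, rfl⟩ _ ⟨f, hf, rfl⟩ hef _ ⟨hve, hvf⟩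
    obtain ⟨a, ha, rfl⟩ := Sym2.mem_map.1 hve
    obtain ⟨b, hb, hba⟩ := Sym2.mem_map.1 hvf
    rw [φ.injective hba] at hb
    exact hN.2 e he f hf (fun h => hef (h ▸ rfl)) a ⟨ha, hb⟩

lemma IsMatchingSet.preimage_embedding {M : Set (Sym2 V)} (hM : IsMatchingSet G M)
    (φ : H ↪g G) : IsMatchingSet H (Sym2.map φ ⁻¹' M) :=
  ⟨fun _ he => φ.map_mem_edgeSet_iff.1 (hM.1 he),
    fun _ he _ hf hef v hv => hM.2 _ he _ hf ((Sym2.map.injective φ.injective).ne hef) (φ v)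
      ⟨Sym2.mem_map.2 ⟨v, hv.1, rfl⟩, Sym2.mem_map.2 ⟨v, hv.2, rfl⟩⟩⟩

lemma disjoint_of_disjoint_mVerts {M N : Set (Sym2 V)} (h : Disjoint (mVerts M) (mVerts N)) :
    Disjoint M N :=
  Set.disjoint_left.2 fun e hM hN =>
    Set.disjoint_left.1 h ⟨e, hM, e.out_fst_mem⟩ ⟨e, hN, e.out_fst_mem⟩

lemma IsMatchingSet.union {M N : Set (Sym2 V)} (hM : IsMatchingSet G M)
    (hN : IsMatchingSet G N) (h : Disjoint (mVerts M) (mVerts N)) :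
    IsMatchingSet G (M ∪ N) := by
  refine ⟨Set.union_subset hM.1 hN.1, ?_⟩
  rintro e (he | he) f (hf | hf) hef v ⟨hve, hvf⟩
  · exact hM.2 e he f hf hef v ⟨hve, hvf⟩
  · exact Set.disjoint_left.1 h ⟨e, he, hve⟩ ⟨f, hf, hvf⟩
  · exact Set.disjoint_left.1 h ⟨f, hf, hvf⟩ ⟨e, he, hve⟩
  · exact hN.2 e he f hf hef v ⟨hve, hvf⟩

lemma disjoint_mVerts_image_val {S : Set V} (N : Set (Sym2 ↥Sᶜ)) :
    Disjoint S (mVerts (Sym2.map Subtype.val '' N)) := by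
  refine Set.disjoint_right.2 ?_
  rintro v ⟨_, ⟨e, _, rfl⟩, hv⟩
  obtain ⟨w, _, rfl⟩ := Sym2.mem_map.1 hv
  exact w.2

lemma isMaxlMatching_union_image_val {M : Set (Sym2 V)} {N : Set (Sym2 ↥(mVerts M)ᶜ)}
    (hM : IsMatchingSet G M) (hN : IsMaxlMatching (delVerts G (mVerts M)) N) :
    IsMaxlMatching G (M ∪ Sym2.map Subtype.val '' N) := by
  refine ⟨hM.union (hN.1.image_embedding (Embedding.induce _)) (disjoint_mVerts_image_val N),
    fun M' hsub hM' => subset_antisymm (fun e he => ?_) hsub⟩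
  have hpullback : Sym2.map Subtype.val ⁻¹' M' = N :=
    hN.2 _ (fun e he => hsub (Or.inr ⟨e, he, rfl⟩)) (hM'.preimage_embedding (Embedding.induce _))
  by_cases heM : e ∈ M
  · exact Or.inl heM
  have hfree : ∀ v ∈ e, v ∈ (mVerts M)ᶜ := fun v hv ⟨f, hf, hvf⟩ =>
    hM'.2 e he f (hsub (Or.inl hf)) (ne_of_mem_of_not_mem hf heM).symm v ⟨hv, hvf⟩
  refine Or.inr ⟨e.attachWith hfree, ?_, Sym2.attachWith_map_subtypeVal hfree⟩
  rw [← hpullback, Set.mem_preimage, Sym2.attachWith_map_subtypeVal]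
  exact he

end Matching

lemma ncard_le_ncard_of_ncard_union_le {α : Type*} {A B B' : Set α} (hB : Disjoint A B)
    (hB' : Disjoint A B') (hunion : (A ∪ B').ncard ≤ (A ∪ B).ncard)
    (hB'le : B'.ncard ≤ (A ∪ B).ncard) : B'.ncard ≤ B.ncard := by
  rcases (A ∪ B).finite_or_infinite with hfin | hinf
  · rcases B'.finite_or_infinite with hB'fin | hB'inf
    · rw [Set.ncard_union_eq hB (hfin.subset Set.subset_union_left)
        (hfin.subset Set.subset_union_right), Set.ncard_union_eq hB'
        (hfin.subset Set.subset_union_left) hB'fin] at hunion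
      omega
    · simp [hB'inf.ncard]
  -- `ncard` of an infinite set is the junk value `0`, so `hB'le` forces `B'.ncard = 0`.
  · rw [hinf.ncard] at hB'le
    omega

theorem stmt8 (G : SimpleGraph V) (M : Set (Sym2 V)) (hM : IsMatchingSet G M)
    (hG : Equimatchable G) :
    Equimatchable (delVerts G (mVerts M)) := by
  intro N N' hN hN'
  have hN'G : IsMatchingSet G (Sym2.map Subtype.val '' N') :=
    hN'.image_embedding (Embedding.induce _)
  have hmaxl := isMaxlMatching_union_image_val hM hN
  have hcard := ncard_le_ncard_of_ncard_union_le
    (disjoint_of_disjoint_mVerts (disjoint_mVerts_image_val N))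
    (disjoint_of_disjoint_mVerts (disjoint_mVerts_image_val N'))
    (hG _ _ hmaxl (hM.union hN'G (disjoint_mVerts_image_val N'))) (hG _ _ hmaxl hN'G)
  simpa only [Set.ncard_image_of_injective _ (Sym2.map.injective Subtype.val_injective)]
    using hcard
end

section
/- The strong product of two nontrivial connected graphs is 2-connected. -/
open SimpleGraph

variable {V : Type*} {W : Type*}

/-!
Every edge of the box product `G □ H` is an edge of the strong product, so it suffices to show
that `G □ H` minus a vertex `(a, b)` is connected. The rows `V × {w}` with `w ≠ b` and the
columns `{u} × W` with `u ≠ a` avoid `(a, b)` and are connected copies of `G` and `H`. Fixing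
`a' ≠ a` and `b' ≠ b`, a vertex `(u, w)` reaches `(a', b')` along its row and then the column
of `a'` if `w ≠ b`, and along its column and then the row of `b'` otherwise.
-/

namespace SimpleGraph

variable {G : SimpleGraph V} {H : SimpleGraph W}

theorem boxProd_le_strongProd : (G □ H) ≤ strongProd G H := by
  rintro ⟨u, w⟩ ⟨u', w'⟩ h
  refine ⟨h.ne, ?_, ?_⟩ <;> rcases boxProd_adj.mp h with ⟨hG, rfl⟩ | ⟨hH, rfl⟩ <;> tauto

theorem Preconnected.reachable_induce_of_hom {X : Type*} {K : SimpleGraph X} {s : Set X}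
    (hG : G.Preconnected) (f : G →g K) (hf : ∀ v, f v ∈ s) (u v : V) :
    (K.induce s).Reachable ⟨f u, hf u⟩ ⟨f v, hf v⟩ :=
  (hG u v).map (⟨fun v => ⟨f v, hf v⟩, f.map_adj⟩ : G →g K.induce s)

theorem Preconnected.boxProd_induce_compl_singleton [Nontrivial V] [Nontrivial W]
    (hG : G.Preconnected) (hH : H.Preconnected) (a : V) (b : W) :
    ((G □ H).induce {(a, b)}ᶜ).Preconnected := by
  have row_reachable {w : W} (hw : w ≠ b) (u u' : V) :
      ((G □ H).induce {(a, b)}ᶜ).Reachable ⟨(u, w), by simp [hw]⟩ ⟨(u', w), by simp [hw]⟩ :=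
    hG.reachable_induce_of_hom (boxProdLeft G H w).toHom (fun _ => by simp [hw]) u u'
  have col_reachable {u : V} (hu : u ≠ a) (w w' : W) :
      ((G □ H).induce {(a, b)}ᶜ).Reachable ⟨(u, w), by simp [hu]⟩ ⟨(u, w'), by simp [hu]⟩ :=
    hH.reachable_induce_of_hom (boxProdRight G H u).toHom (fun _ => by simp [hu]) w w'
  obtain ⟨a', ha'⟩ := exists_ne a
  obtain ⟨b', hb'⟩ := exists_ne b
  have reachable_base (x : ↥({(a, b)}ᶜ : Set (V × W))) :
      ((G □ H).induce {(a, b)}ᶜ).Reachable x ⟨(a', b'), by simp [ha']⟩ := by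
    obtain ⟨⟨u, w⟩, hx⟩ := x
    by_cases hw : w = b
    · subst hw
      have hu : u ≠ a := by rintro rfl; exact hx rfl
      exact (col_reachable hu w b').trans (row_reachable hb' u a')
    · exact (row_reachable hw u a').trans (col_reachable ha' w b')
  exact fun x y => (reachable_base x).trans (reachable_base y).symm

theorem Connected.boxProd_induce_compl_singleton [Nontrivial V] [Nontrivial W]
    (hG : G.Connected) (hH : H.Connected) (a : V) (b : W) :
    ((G □ H).induce {(a, b)}ᶜ).Connected := by
  obtain ⟨a', ha'⟩ := exists_ne a
  have : Nonempty ↥({(a, b)}ᶜ : Set (V × W)) := ⟨⟨(a', b), by simp [ha']⟩⟩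
  exact ⟨hG.preconnected.boxProd_induce_compl_singleton hH.preconnected a b⟩

end SimpleGraph

theorem stmt9 [Fintype V] [Fintype W] (G : SimpleGraph V) (H : SimpleGraph W)
    (hGn : 2 ≤ Fintype.card V) (hHn : 2 ≤ Fintype.card W)
    (hGc : G.Connected) (hHc : H.Connected) :
    TwoConnected (strongProd G H) := by
  have : Nontrivial V := Fintype.one_lt_card_iff_nontrivial.mp hGn
  have : Nontrivial W := Fintype.one_lt_card_iff_nontrivial.mp hHn
  refine ⟨?_, (hGc.boxProd hHc).mono boxProd_le_strongProd, ?_⟩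
  · rw [Fintype.card_prod]
    nlinarith
  · rintro ⟨a, b⟩
    exact (hGc.boxProd_induce_compl_singleton hHc a b).mono
      (comap_monotone _ boxProd_le_strongProd)
end
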